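/- arXiv:2302.14697 — 2 statements merged into one kernel-verified Lean document; each statement's English description precedes it below -/
import Mathlib

section
/- For ideals I, J in a polynomial ring over an algebraically closed field, the vanishing set of the saturation I : J^∞ equals the Zariski closure of V(I) \ V(J). -/
open MvPolynomial

/-- The affine variety in `k^n` of a set of polynomials. -/
def zeroSet {k : Type*} [CommSemiring k] {n : ℕ}
    (S : Set (MvPolynomial (Fin n) k)) : Set (Fin n → k) :=
  {x | ∀ f ∈ S, eval x f = 0}

/-- The Zariski closure of a subset of `k^n`: the smallest affine variety containing it,
i.e. the common zero set of all polynomials vanishing on the set. -/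
def zariskiClosure {k : Type*} [CommSemiring k] {n : ℕ}
    (S : Set (Fin n → k)) : Set (Fin n → k) :=
  {x | ∀ f : MvPolynomial (Fin n) k, (∀ y ∈ S, eval y f = 0) → eval x f = 0}

/-!
The inclusion `V(I : J^∞) ⊇ closure (V(I) \ V(J))` holds because a polynomial `f` with
`f J^ℓ ⊆ I` vanishes at every point of `V(I)` where some `g ∈ J` does not, as `f g^ℓ ∈ I`.
Conversely, if `f` vanishes on `V(I) \ V(J)` then `f g` vanishes on `V(I)` for every `g ∈ J`,
so `f J ⊆ √I` by the Nullstellensatz; since `(f) J` is finitely generated, some power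
`f^m J^m` lies in `I`, hence `f^m ∈ I : J^∞` and `f` vanishes on `V(I : J^∞)`.
-/

theorem Ideal.exists_pow_mul_mem_of_forall_mul_mem_radical {R : Type*} [CommRing R]
    [IsNoetherianRing R] {I J : Ideal R} {f : R} (h : ∀ g ∈ J, f * g ∈ I.radical) :
    ∃ m, 0 < m ∧ ∀ g ∈ J ^ m, f ^ m * g ∈ I := by
  have hle : Ideal.span {f} * J ≤ I.radical := Ideal.mul_le.2 fun a ha g hg => by
    obtain ⟨c, rfl⟩ := Ideal.mem_span_singleton'.1 ha
    rw [mul_assoc]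
    exact I.radical.mul_mem_left c (h g hg)
  obtain ⟨N, hN⟩ := Ideal.exists_pow_le_of_le_radical_of_fg hle (IsNoetherian.noetherian _)
  refine ⟨N + 1, N.succ_pos, fun g hg => (Ideal.pow_le_pow_right N.le_succ).trans hN ?_⟩
  rw [mul_pow, Ideal.span_singleton_pow]
  exact Ideal.mul_mem_mul (Ideal.mem_span_singleton_self _) hg

theorem mem_radical_of_forall_mem_zeroSet_eval_eq_zero {k : Type*} [Field k] [IsAlgClosed k]
    {n : ℕ} {I : Ideal (MvPolynomial (Fin n) k)} {p : MvPolynomial (Fin n) k}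
    (h : ∀ y ∈ zeroSet (I : Set (MvPolynomial (Fin n) k)), eval y p = 0) : p ∈ I.radical := by
  rw [← vanishingIdeal_zeroLocus_eq_radical (K := k) I]
  exact h

theorem mul_mem_radical_of_eval_eq_zero_on_zeroSet_diff {k : Type*} [Field k] [IsAlgClosed k]
    {n : ℕ} {I J : Ideal (MvPolynomial (Fin n) k)} {f : MvPolynomial (Fin n) k}
    (hf : ∀ y ∈ zeroSet (I : Set (MvPolynomial (Fin n) k)) \
      zeroSet (J : Set (MvPolynomial (Fin n) k)), eval y f = 0)
    {g : MvPolynomial (Fin n) k} (hg : g ∈ J) : f * g ∈ I.radical := by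
  refine mem_radical_of_forall_mem_zeroSet_eval_eq_zero fun y hy => ?_
  rw [map_mul]
  by_cases hgy : eval y g = 0
  · rw [hgy, mul_zero]
  · rw [hf y ⟨hy, fun hJ => hgy (hJ g hg)⟩, zero_mul]

theorem eval_eq_zero_of_mem_zeroSet_diff {k : Type*} [CommRing k] [IsDomain k] {n : ℕ}
    {I J : Ideal (MvPolynomial (Fin n) k)} {f : MvPolynomial (Fin n) k} {ℓ : ℕ}
    (hf : ∀ g ∈ J ^ ℓ, f * g ∈ I) {y : Fin n → k}
    (hy : y ∈ zeroSet (I : Set (MvPolynomial (Fin n) k)) \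
      zeroSet (J : Set (MvPolynomial (Fin n) k))) : eval y f = 0 := by
  obtain ⟨hyI, hyJ⟩ := hy
  obtain ⟨g, hg, hgy⟩ : ∃ g ∈ J, eval y g ≠ 0 := by
    by_contra! hJ
    exact hyJ hJ
  have h0 : eval y (f * g ^ ℓ) = 0 := hyI _ (hf _ (Ideal.pow_mem_pow hg ℓ))
  rw [map_mul, map_pow] at h0
  exact (mul_eq_zero.mp h0).resolve_right (pow_ne_zero ℓ hgy)

/-- For ideals `I, J` in a polynomial ring over an algebraically closed field, the vanishing
set of the saturation `I : J^∞` equals the Zariski closure of `V(I) \ V(J)`. -/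
theorem vanishing_of_saturation_eq_closure_diff
    {k : Type*} [Field k] [IsAlgClosed k] {n : ℕ}
    (I J : Ideal (MvPolynomial (Fin n) k)) :
    zeroSet {f | ∃ ℓ : ℕ, 0 < ℓ ∧ ∀ g ∈ J ^ ℓ, f * g ∈ I} =
      zariskiClosure (zeroSet (I : Set (MvPolynomial (Fin n) k)) \
        zeroSet (J : Set (MvPolynomial (Fin n) k))) := by
  ext x
  constructor
  · intro hx f hf
    obtain ⟨m, hm, hfm⟩ := Ideal.exists_pow_mul_mem_of_forall_mul_mem_radical fun g hg =>
      mul_mem_radical_of_eval_eq_zero_on_zeroSet_diff hf hg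
    have hxm : eval x (f ^ m) = 0 := hx _ ⟨m, hm, hfm⟩
    rwa [map_pow, pow_eq_zero_iff hm.ne'] at hxm
  · rintro hx f ⟨ℓ, -, hf⟩
    exact hx f fun y hy => eval_eq_zero_of_mem_zeroSet_diff hf hy
end

section
/- Let L ⊆ ℂ[x_1,...,x_n,p_1,...,p_k] be an ideal with Gröbner basis G = {g₁,...,g_s} for the lex order x₁ > ... > x_n > p₁ > ... > p_k. For each g_i ∉ ℂ[p], write g_i = c_i(p)·x^{α_i} + h_i with all terms of h_i strictly smaller than x^{α_i}. If q ∈ V(L ∩ ℂ[p]) and c_i(q) ≠ 0 for all such i, then {φ_q(g_i) | g_i ∉ ℂ[p]} is a Gröbner basis of φ_q(L) ⊆ ℂ[x] for the lex order x₁ > ... > x_n. -/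
open MvPolynomial

variable {σ R : Type*} [CommSemiring R]

/-- The leading monomial (exponent vector) of a multivariate polynomial w.r.t. a monomial
order (the maximal element of its support; `0` for the zero polynomial). -/
noncomputable def leadMonomial (m : MonomialOrder σ) (p : MvPolynomial σ R) : σ →₀ ℕ :=
  m.toSyn.symm (p.support.sup m.toSyn)

/-- The leading term of a multivariate polynomial w.r.t. a monomial order. -/
noncomputable def leadTerm (m : MonomialOrder σ) (p : MvPolynomial σ R) : MvPolynomial σ R :=
  monomial (leadMonomial m p) (coeff (leadMonomial m p) p)

/-- The ideal generated by the leading terms of the nonzero elements of a set. -/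
noncomputable def ltIdeal (m : MonomialOrder σ) (S : Set (MvPolynomial σ R)) :
    Ideal (MvPolynomial σ R) :=
  Ideal.span {q | ∃ p ∈ S, p ≠ 0 ∧ q = leadTerm m p}

/-- `G` is a Gröbner basis of the ideal `L` relative to the monomial order `m`: a generating
set of `L` whose leading terms generate the ideal of leading terms of `L`. -/
def IsGroebnerBasis (m : MonomialOrder σ) (L : Ideal (MvPolynomial σ R))
    (G : Set (MvPolynomial σ R)) : Prop :=
  G ⊆ L ∧ Ideal.span G = L ∧ ltIdeal m G = ltIdeal m (L : Set (MvPolynomial σ R))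

/-!
Write `φ` for `φ_q`, and for `u ∈ ℂ[p][x]` let `α_u` and `c_u ∈ ℂ[p]` be its leading `x`-monomial
and coefficient. Everything rests on one claim: for every `u ∈ L` with `φ u ≠ 0` some
`g ∈ G \ ℂ[p]` has `x^{α_g} ∣ LM(φ u)`. Since `LT(φ g) = c_g(q) x^{α_g}`, this gives the equality
of leading-term ideals, and the generating property holds because `φ` kills `G ∩ ℂ[p]`.

The claim is proved by well-founded induction on the lex leading monomial of `u` in `ℂ[x,p]`,
whose `x`-part is `α_u` because `x > p`. Take `g ∈ G` with `LM g ∣ LM u`. If `g ∈ ℂ[p]`, then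
`φ g = g(q) = 0`, and cancelling the leading term of `u` against `g` lowers `LM u` while multiplying
`φ u` by a nonzero constant. Otherwise `α_g ∣ α_u`. If `c_u(q) ≠ 0`, then `LM(φ u) = x^{α_u}`.
If `c_u(q) = 0`, then `c_g u - c_u x^{α_u - α_g} g` has smaller `α`, hence a smaller leading
monomial, and specializes to `c_g(q) φ u`.
-/

namespace MonomialOrder

noncomputable def crossReduce {A : Type*} [CommRing A] (m : MonomialOrder σ)
    (f g : MvPolynomial σ A) : MvPolynomial σ A :=
  C (m.leadingCoeff g) * f - monomial (m.degree f - m.degree g) (m.leadingCoeff f) * g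

variable {m : MonomialOrder σ}

theorem degree_lt_of_coeff_eq_zero {f : MvPolynomial σ R} {d : σ →₀ ℕ} (hf : f ≠ 0)
    (hle : m.degree f ≼[m] d) (hd : f.coeff d = 0) : m.degree f ≺[m] d := by
  refine lt_of_le_of_ne hle fun h => hf ?_
  rwa [← m.toSyn.injective h, ← leadingCoeff, leadingCoeff_eq_zero_iff] at hd

theorem degree_crossReduce_lt {A : Type*} [CommRing A] {f g : MvPolynomial σ A}
    (hgf : m.degree g ≤ m.degree f) (h : m.crossReduce f g ≠ 0) :
    m.degree (m.crossReduce f g) ≺[m] m.degree f := by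
  apply degree_lt_of_coeff_eq_zero h
  · refine degree_sub_le.trans (sup_le (degree_mul_le.trans ?_) (degree_mul_le.trans ?_))
    · simp [degree_C]
    · rw [map_add]
      calc _ ≤ m.toSyn (m.degree f - m.degree g) + m.toSyn (m.degree g) := by
            gcongr
            exact degree_monomial_le _
        _ = m.toSyn (m.degree f) := by rw [← map_add, tsub_add_cancel_of_le hgf]
  · rw [crossReduce, coeff_sub, coeff_C_mul, coeff_monomial_mul', if_pos tsub_le_self,
      tsub_tsub_cancel_of_le hgf]
    exact sub_eq_zero.2 (mul_comm _ _)

theorem crossReduce_mem {A : Type*} [CommRing A] {I : Ideal (MvPolynomial σ A)}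
    {f g : MvPolynomial σ A} (hf : f ∈ I) (hg : g ∈ I) : m.crossReduce f g ∈ I :=
  I.sub_mem (I.mul_mem_left _ hf) (I.mul_mem_left _ hg)

theorem degree_map_of_leadingCoeff {A B : Type*} [CommSemiring A] [CommSemiring B] (ψ : A →+* B)
    {f : MvPolynomial σ A} (hf : ψ (m.leadingCoeff f) ≠ 0) :
    m.degree (map ψ f) = m.degree f := by
  refine m.toSyn.injective (le_antisymm
    (degree_le_iff.2 fun d hd => le_degree (support_map_subset ψ f hd)) (le_degree ?_))
  rwa [MvPolynomial.mem_support_iff, coeff_map]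

theorem leadingTerm_dvd_leadingTerm {K : Type*} [Field K] {f g : MvPolynomial σ K} (hg : g ≠ 0)
    (h : m.degree g ≤ m.degree f) : m.leadingTerm g ∣ m.leadingTerm f := by
  refine ⟨monomial (m.degree f - m.degree g) (m.leadingCoeff f / m.leadingCoeff g), ?_⟩
  rw [leadingTerm, leadingTerm, monomial_mul, add_tsub_cancel_of_le h,
    mul_div_cancel₀ _ (m.leadingCoeff_ne_zero_iff.2 hg)]

end MonomialOrder

open MonomialOrder

section GroebnerBasis

variable {m : MonomialOrder σ} {L : Ideal (MvPolynomial σ R)} {G : Set (MvPolynomial σ R)}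

theorem leadTerm_eq_leadingTerm (p : MvPolynomial σ R) : leadTerm m p = m.leadingTerm p := rfl

theorem leadTerm_mem_ltIdeal {S : Set (MvPolynomial σ R)} {p : MvPolynomial σ R} (hp : p ∈ S)
    (hp0 : p ≠ 0) : leadTerm m p ∈ ltIdeal m S :=
  Ideal.subset_span ⟨p, hp, hp0, rfl⟩

theorem ltIdeal_mono {S T : Set (MvPolynomial σ R)} (h : S ⊆ T) : ltIdeal m S ≤ ltIdeal m T :=
  Ideal.span_mono <| by
    rintro _ ⟨p, hp, hp0, rfl⟩
    exact ⟨p, h hp, hp0, rfl⟩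

theorem ltIdeal_le_span_monomial_degree (S : Set (MvPolynomial σ R)) :
    ltIdeal m S ≤
      Ideal.span ((fun d => monomial d 1) '' {d | ∃ p ∈ S, p ≠ 0 ∧ d = m.degree p}) := by
  refine Ideal.span_le.2 ?_
  rintro _ ⟨p, hp, hp0, rfl⟩
  rw [SetLike.mem_coe, leadTerm_eq_leadingTerm, leadingTerm, ← mul_one (m.leadingCoeff p),
    ← C_mul_monomial]
  exact Ideal.mul_mem_left _ _ (Ideal.subset_span ⟨m.degree p, ⟨p, hp, hp0, rfl⟩, rfl⟩)

theorem IsGroebnerBasis.exists_degree_le (hG : IsGroebnerBasis m L G) {v : MvPolynomial σ R}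
    (hv : v ∈ L) (hv0 : v ≠ 0) : ∃ g ∈ G, g ≠ 0 ∧ m.degree g ≤ m.degree v := by
  have hlt : leadTerm m v ∈ ltIdeal m G := hG.2.2 ▸ leadTerm_mem_ltIdeal hv hv0
  obtain ⟨_, ⟨g, hg, hg0, rfl⟩, hle⟩ :=
    mem_ideal_span_monomial_image.1 (ltIdeal_le_span_monomial_degree G hlt) (m.degree v) <| by
      rw [leadTerm_eq_leadingTerm, support_leadingTerm' hv0]
      exact Finset.mem_singleton_self _
  exact ⟨g, hg, hg0, hle⟩

end GroebnerBasis

section SumLex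

open Finsupp

variable {τ : Type*}

theorem coeff_coeff_sumAlgEquiv (F : MvPolynomial (σ ⊕ τ) R) (d : σ ⊕ τ →₀ ℕ) :
    ((sumAlgEquiv R σ τ F).coeff (sumFinsuppEquivProdFinsupp d).1).coeff
      (sumFinsuppEquivProdFinsupp d).2 = F.coeff d := by
  simp [sumAlgEquiv, coeff, AddMonoidAlgebra.curryAlgEquiv, AddMonoidAlgebra.curryRingEquiv,
    AddMonoidAlgebra.curryAddEquiv]

variable [LinearOrder σ] [LinearOrder τ] [WellFoundedGT (σ ⊕ₗ τ)]

/-- The elimination order `σ > τ`: `lex` on `σ ⊕ₗ τ`, retyped as an order on `σ ⊕ τ` so that it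
applies to the polynomials `sumAlgEquiv` acts on. -/
noncomputable def MonomialOrder.sumLex : MonomialOrder (σ ⊕ τ) :=
  MonomialOrder.lex (σ := σ ⊕ₗ τ)

theorem MonomialOrder.sumLex_lt_of_fst_lt {a b : σ ⊕ τ →₀ ℕ}
    (h : toLex (sumFinsuppEquivProdFinsupp a).1 < toLex (sumFinsuppEquivProdFinsupp b).1) :
    a ≺[sumLex] b := by
  obtain ⟨i, hlt, hi⟩ := Finsupp.Lex.lt_iff.1 h
  refine Finsupp.Lex.lt_iff.2 ⟨(Sum.inl i : σ ⊕ₗ τ), fun j hj => ?_, hi⟩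
  obtain j | j := j
  · exact hlt j (Sum.Lex.inl_lt_inl_iff.1 hj)
  · exact absurd hj Sum.Lex.not_inr_lt_inl

variable [WellFoundedGT σ]

theorem degree_sumAlgEquiv (F : MvPolynomial (σ ⊕ τ) R) :
    lex.degree (sumAlgEquiv R σ τ F) = (sumFinsuppEquivProdFinsupp (sumLex.degree F)).1 := by
  rcases eq_or_ne F 0 with rfl | hF
  · ext; simp
  have hE : sumAlgEquiv R σ τ F ≠ 0 := (map_ne_zero_iff _ (AlgEquiv.injective _)).2 hF
  refine toLex.injective (le_antisymm ?_ ?_)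
  · by_contra! hlt
    obtain ⟨ρ, hρ⟩ := ne_zero_iff.1 ((coeff_degree_ne_zero_iff (m := lex)).2 hE)
    set d := sumFinsuppEquivProdFinsupp.symm (lex.degree (sumAlgEquiv R σ τ F), ρ)
    have hd : F.coeff d ≠ 0 := by
      rwa [← coeff_coeff_sumAlgEquiv F d, Equiv.apply_symm_apply]
    exact (le_degree (m := sumLex) (MvPolynomial.mem_support_iff.2 hd)).not_gt
      (sumLex_lt_of_fst_lt (by simpa [d] using hlt))
  · refine lex_le_iff.1 (le_degree (MvPolynomial.mem_support_iff.2 fun h0 => hF ?_))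
    rw [← leadingCoeff_eq_zero_iff (m := sumLex), leadingCoeff, ← coeff_coeff_sumAlgEquiv, h0,
      coeff_zero]

theorem degree_sumAlgEquiv_le {F F' : MvPolynomial (σ ⊕ τ) R}
    (h : sumLex.degree F ≤ sumLex.degree F') :
    lex.degree (sumAlgEquiv R σ τ F) ≤ lex.degree (sumAlgEquiv R σ τ F') := by
  rw [degree_sumAlgEquiv, degree_sumAlgEquiv]
  exact fun i => h (Sum.inl i)

theorem degree_lt_of_degree_sumAlgEquiv_lt {F F' : MvPolynomial (σ ⊕ τ) R}
    (h : lex.degree (sumAlgEquiv R σ τ F) ≺[lex] lex.degree (sumAlgEquiv R σ τ F')) :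
    sumLex.degree F ≺[sumLex] sumLex.degree F' := by
  rw [lex_lt_iff, degree_sumAlgEquiv, degree_sumAlgEquiv] at h
  exact sumLex_lt_of_fst_lt h

end SumLex

section Specialization

variable {τ : Type*}

noncomputable def specializeAt (q : τ → R) : MvPolynomial (σ ⊕ τ) R →ₐ[R] MvPolynomial σ R :=
  aeval (Sum.elim X fun j => C (q j))

theorem specializeAt_eq_map_sumAlgEquiv (q : τ → R) (F : MvPolynomial (σ ⊕ τ) R) :
    specializeAt q F = map (eval q) (sumAlgEquiv R σ τ F) := by
  have : specializeAt q = (mapAlgHom (aeval q)).comp (sumAlgEquiv R σ τ).toAlgHom := by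
    refine algHom_ext fun i => ?_
    obtain i | j := i <;> simp [specializeAt]
  exact DFunLike.congr_fun this F

theorem specializeAt_rename_inr (q : τ → R) (w : MvPolynomial τ R) :
    specializeAt q (rename (Sum.inr : τ → σ ⊕ τ) w) = C (eval q w) := by
  rw [specializeAt, aeval_rename, Sum.elim_comp_inr, ← coe_aeval_eq_eval]
  exact aeval_C_comp_left q w

theorem specializeAt_rename_inl (q : τ → R) (f : MvPolynomial σ R) :
    specializeAt q (rename (Sum.inl : σ → σ ⊕ τ) f) = f := by
  rw [specializeAt, aeval_rename, Sum.elim_comp_inl, aeval_X_left_apply]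

theorem specializeAt_surjective (q : τ → R) : Function.Surjective (specializeAt (σ := σ) q) :=
  fun f => ⟨_, specializeAt_rename_inl q f⟩

theorem exists_degree_lt_of_specializeAt_eq_zero {K : Type*} [Field K] {q : τ → K}
    {m : MonomialOrder (σ ⊕ τ)} {L : Ideal (MvPolynomial (σ ⊕ τ) K)}
    {u g : MvPolynomial (σ ⊕ τ) K} (hu : u ∈ L) (hg : g ∈ L) (hφu : specializeAt q u ≠ 0)
    (hφg : specializeAt q g = 0) (hg0 : g ≠ 0) (hle : m.degree g ≤ m.degree u) :
    ∃ u' ∈ L, m.degree u' ≺[m] m.degree u ∧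
      ∃ a : K, a ≠ 0 ∧ specializeAt q u' = a • specializeAt q u := by
  set a := m.leadingCoeff g
  have ha : a ≠ 0 := leadingCoeff_ne_zero_iff.2 hg0
  have hφ : specializeAt q (m.crossReduce u g) = a • specializeAt q u := by
    rw [crossReduce, map_sub, map_mul _ _ g, hφg, mul_zero, sub_zero, ← smul_eq_C_mul, map_smul]
  have hne : m.crossReduce u g ≠ 0 := by
    intro h
    rw [h, map_zero] at hφ
    exact smul_ne_zero ha hφu hφ.symm
  exact ⟨_, crossReduce_mem hu hg, degree_crossReduce_lt hle hne, a, ha, hφ⟩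

variable [LinearOrder σ] [WellFoundedGT σ]

theorem degree_specializeAt {q : τ → R} {F : MvPolynomial (σ ⊕ τ) R}
    (hF : eval q (lex.leadingCoeff (sumAlgEquiv R σ τ F)) ≠ 0) :
    lex.degree (specializeAt q F) = lex.degree (sumAlgEquiv R σ τ F) := by
  rw [specializeAt_eq_map_sumAlgEquiv]
  exact degree_map_of_leadingCoeff _ hF

theorem leadingCoeff_specializeAt {q : τ → R} {F : MvPolynomial (σ ⊕ τ) R}
    (hF : eval q (lex.leadingCoeff (sumAlgEquiv R σ τ F)) ≠ 0) :
    lex.leadingCoeff (specializeAt q F) = eval q (lex.leadingCoeff (sumAlgEquiv R σ τ F)) := by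
  rw [leadingCoeff, degree_specializeAt hF, specializeAt_eq_map_sumAlgEquiv, coeff_map,
    leadingCoeff]

end Specialization

section GroebnerSpecialization

variable [LinearOrder σ] [WellFoundedGT σ] {τ : Type*} [LinearOrder τ] [WellFoundedGT (σ ⊕ₗ τ)]
  {K : Type*} [Field K] {q : τ → K} {L : Ideal (MvPolynomial (σ ⊕ τ) K)}
  {G : Set (MvPolynomial (σ ⊕ τ) K)}

theorem exists_degree_lt_of_eval_leadingCoeff_eq_zero {u g : MvPolynomial (σ ⊕ τ) K}
    (hu : u ∈ L) (hg : g ∈ L) (hφu : specializeAt q u ≠ 0)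
    (hle : lex.degree (sumAlgEquiv K σ τ g) ≤ lex.degree (sumAlgEquiv K σ τ u))
    (hcu : eval q (lex.leadingCoeff (sumAlgEquiv K σ τ u)) = 0)
    (hcg : eval q (lex.leadingCoeff (sumAlgEquiv K σ τ g)) ≠ 0) :
    ∃ u' ∈ L, sumLex.degree u' ≺[sumLex] sumLex.degree u ∧
      ∃ a : K, a ≠ 0 ∧ specializeAt q u' = a • specializeAt q u := by
  set E := sumAlgEquiv K σ τ
  set u' := E.symm (lex.crossReduce (E u) (E g))
  have hu' : u' = E.symm (C (lex.leadingCoeff (E g))) * u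
      - E.symm (monomial (lex.degree (E u) - lex.degree (E g)) (lex.leadingCoeff (E u))) * g := by
    simp [u', crossReduce]
  have hφ : specializeAt q u' = eval q (lex.leadingCoeff (E g)) • specializeAt q u := by
    rw [specializeAt_eq_map_sumAlgEquiv, AlgEquiv.apply_symm_apply, crossReduce, map_sub, map_mul,
      map_mul, map_C, map_monomial, hcu, monomial_zero, zero_mul, sub_zero, smul_eq_C_mul,
      specializeAt_eq_map_sumAlgEquiv]
  have hne : lex.crossReduce (E u) (E g) ≠ 0 := by
    intro h
    rw [specializeAt_eq_map_sumAlgEquiv, AlgEquiv.apply_symm_apply, h, map_zero] at hφ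
    exact smul_ne_zero hcg hφu hφ.symm
  refine ⟨u', ?_, degree_lt_of_degree_sumAlgEquiv_lt ?_, _, hcg, hφ⟩
  · rw [hu']
    exact L.sub_mem (L.mul_mem_left _ hu) (L.mul_mem_left _ hg)
  · rw [AlgEquiv.apply_symm_apply]
    exact degree_crossReduce_lt hle hne

theorem IsGroebnerBasis.exists_degree_le_degree_specializeAt (hG : IsGroebnerBasis sumLex L G)
    (hq : ∀ w, rename Sum.inr w ∈ L → eval q w = 0)
    (hc : ∀ g ∈ G, g ∉ Set.range (rename Sum.inr) →
      eval q (lex.leadingCoeff (sumAlgEquiv K σ τ g)) ≠ 0)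
    {u : MvPolynomial (σ ⊕ τ) K} (hu : u ∈ L) (hφu : specializeAt q u ≠ 0) :
    ∃ g ∈ G, g ∉ Set.range (rename Sum.inr) ∧
      lex.degree (sumAlgEquiv K σ τ g) ≤ lex.degree (specializeAt q u) := by
  induction hd : sumLex.toSyn (sumLex.degree u) using WellFoundedLT.induction generalizing u with
  | _ d ih =>
  have hu0 : u ≠ 0 := fun h => hφu (by rw [h, map_zero])
  obtain ⟨g, hgG, hg0, hle⟩ := hG.exists_degree_le hu hu0
  have hg := hG.1 hgG
  have descent : (∃ g ∈ G, g ∉ Set.range (rename Sum.inr) ∧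
        lex.degree (sumAlgEquiv K σ τ g) ≤ lex.degree (specializeAt q u)) ∨
      ∃ u' ∈ L, sumLex.degree u' ≺[sumLex] sumLex.degree u ∧
        ∃ a : K, a ≠ 0 ∧ specializeAt q u' = a • specializeAt q u := by
    by_cases hgr : g ∈ Set.range (rename Sum.inr)
    · obtain ⟨w, rfl⟩ := hgr
      refine .inr (exists_degree_lt_of_specializeAt_eq_zero hu hg hφu ?_ hg0 hle)
      rw [specializeAt_rename_inr, hq w hg, C_0]
    by_cases hcu : eval q (lex.leadingCoeff (sumAlgEquiv K σ τ u)) = 0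
    · exact .inr (exists_degree_lt_of_eval_leadingCoeff_eq_zero hu hg hφu
        (degree_sumAlgEquiv_le hle) hcu (hc g hgG hgr))
    · exact .inl ⟨g, hgG, hgr, degree_specializeAt hcu ▸ degree_sumAlgEquiv_le hle⟩
  obtain h | ⟨u', hu', hlt, a, ha, hφ⟩ := descent
  · exact h
  · have hφu' : specializeAt q u' ≠ 0 := hφ ▸ smul_ne_zero ha hφu
    obtain ⟨g', hg'G, hg'r, hle'⟩ := ih _ (hd ▸ hlt) hu' hφu' rfl
    refine ⟨g', hg'G, hg'r, ?_⟩
    rwa [hφ, degree_smul_of_isRegular (IsRegular.of_ne_zero ha)] at hle'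

theorem IsGroebnerBasis.map_specializeAt (hG : IsGroebnerBasis sumLex L G)
    (hq : ∀ w, rename Sum.inr w ∈ L → eval q w = 0)
    (hc : ∀ g ∈ G, g ∉ Set.range (rename Sum.inr) →
      eval q (lex.leadingCoeff (sumAlgEquiv K σ τ g)) ≠ 0) :
    IsGroebnerBasis lex (L.map (specializeAt q).toRingHom)
      (specializeAt q '' (G \ Set.range (rename Sum.inr))) := by
  have hsub : specializeAt q '' (G \ Set.range (rename Sum.inr)) ⊆
      L.map (specializeAt q).toRingHom := by
    rintro _ ⟨g, ⟨hg, -⟩, rfl⟩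
    exact Ideal.mem_map_of_mem _ (hG.1 hg)
  refine ⟨hsub, le_antisymm (Ideal.span_le.2 hsub) ?_, le_antisymm (ltIdeal_mono hsub) ?_⟩
  · rw [← hG.2.1, Ideal.map_span, Ideal.span_le]
    rintro _ ⟨g, hg, rfl⟩
    by_cases hgr : g ∈ Set.range (rename Sum.inr)
    · obtain ⟨w, rfl⟩ := hgr
      simp [specializeAt_rename_inr, hq w (hG.1 hg)]
    · exact Ideal.subset_span ⟨g, ⟨hg, hgr⟩, rfl⟩
  · rw [ltIdeal, Ideal.span_le]
    rintro _ ⟨f, hf, hf0, rfl⟩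
    obtain ⟨u, hu, rfl⟩ := (Ideal.mem_map_iff_of_surjective _ (specializeAt_surjective q)).1 hf
    obtain ⟨g, hgG, hgr, hle⟩ := hG.exists_degree_le_degree_specializeAt hq hc hu hf0
    have hcg := hc g hgG hgr
    have hφg0 : specializeAt q g ≠ 0 :=
      leadingCoeff_ne_zero_iff.1 (leadingCoeff_specializeAt hcg ▸ hcg)
    rw [← degree_specializeAt hcg] at hle
    exact Ideal.mem_of_dvd _ (leadingTerm_dvd_leadingTerm hφg0 hle)
      (leadTerm_mem_ltIdeal ⟨g, ⟨hgG, hgr⟩, rfl⟩ hφg0)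

end GroebnerSpecialization

/-- Specialization of Gröbner bases (CLO, Ch. 4 §7, Thm. 2). Let `L ⊆ ℂ[x,p]` have Gröbner
basis `G` for the lex order `x₁ > … > x_n > p₁ > … > p_k`. For `g ∈ G` with `g ∉ ℂ[p]`,
write `g = c_g(p)·x^{α_g} + h_g` (with `x^{α_g}` the lex-leading `x`-monomial of `g` viewed
in `(ℂ[p])[x]` and `c_g ∈ ℂ[p]` its coefficient). If `q ∈ V(L ∩ ℂ[p])` and `c_g(q) ≠ 0` for
all such `g`, then `{φ_q(g) | g ∈ G, g ∉ ℂ[p]}` is a Gröbner basis of `φ_q(L) ⊆ ℂ[x]` for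
the lex order `x₁ > … > x_n`. -/
theorem specialization_of_groebner_basis {n k : ℕ}
    (L : Ideal (MvPolynomial (Fin n ⊕ₗ Fin k) ℂ))
    (G : Set (MvPolynomial (Fin n ⊕ₗ Fin k) ℂ))
    (hG : IsGroebnerBasis MonomialOrder.lex L G)
    (q : Fin k → ℂ)
    -- `q ∈ V(L ∩ ℂ[p])`
    (hq : ∀ g : MvPolynomial (Fin k) ℂ, rename Sum.inr g ∈ L → eval q g = 0)
    -- the leading coefficients `c_g(p)` do not vanish at `q`
    (hc : ∀ g ∈ G, g ∉ Set.range (rename (Sum.inr : Fin k → Fin n ⊕ₗ Fin k)) →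
      eval q (coeff
        (leadMonomial (MonomialOrder.lex : MonomialOrder (Fin n)) (sumAlgEquiv ℂ (Fin n) (Fin k) g))
        (sumAlgEquiv ℂ (Fin n) (Fin k) g)) ≠ 0) :
    IsGroebnerBasis (MonomialOrder.lex : MonomialOrder (Fin n))
      (Ideal.map (aeval (Sum.elim X fun j => C (q j)) :
          MvPolynomial (Fin n ⊕ₗ Fin k) ℂ →ₐ[ℂ] MvPolynomial (Fin n) ℂ).toRingHom L)
      ((aeval (Sum.elim X fun j => C (q j)) :
          MvPolynomial (Fin n ⊕ₗ Fin k) ℂ →ₐ[ℂ] MvPolynomial (Fin n) ℂ) ''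
        (G \ Set.range (rename (Sum.inr : Fin k → Fin n ⊕ₗ Fin k)))) :=
  IsGroebnerBasis.map_specializeAt hG hq hc
end
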